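/- For all real x with 0 < x < 1, e^{-x}/(1 - e^{-x})^2 < 1/x^2 - (e^2 - 3e + 1)/(e^2 - 2e + 1). -/

import Mathlib

/-!
Since `e^{-x} / (1 - e^{-x})² = 1 / (4 sinh² (x/2))`, the constant `(e² - 3e + 1) / (e - 1)²` is the
value at `x = 1` of `1/x² - e^{-x} / (1 - e^{-x})²`, and it suffices that `t ↦ 1/t² - 1/sinh² t`
is strictly decreasing on `(0, ∞)`. Its derivative is negative by Lazarević's inequality
`t³ cosh t < sinh³ t`, which follows from `sinh t ≥ t + t³/6` and `cosh² t = 1 + sinh² t`.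
-/

open Real Set

theorem Real.add_pow_three_div_six_le_sinh {t : ℝ} (ht : 0 ≤ t) : t + t ^ 3 / 6 ≤ sinh t := by
  have := sum_le_hasSum (Finset.range 2) (fun n _ ↦ by positivity) (hasSum_sinh t)
  norm_num [Finset.sum_range_succ, Nat.factorial] at this
  linarith

lemma one_add_sq_mul_sq_lt_pow_six {t u : ℝ} (hu : 1 < u) (ht : t ^ 2 ≤ 6 * (u - 1)) :
    1 + t ^ 2 * u ^ 2 < u ^ 6 :=
  calc 1 + t ^ 2 * u ^ 2 ≤ 1 + 6 * (u - 1) * u ^ 2 := by gcongr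
    _ < u ^ 6 := by
      -- `u⁶ - 1 - 6 (u - 1) u² = (u - 1)² (u⁴ + 2u³ + (3u + 1)(u - 1))`
      have hq : 0 < u ^ 4 + 2 * u ^ 3 + (3 * u + 1) * (u - 1) := by
        have : 0 < (3 * u + 1) * (u - 1) := mul_pos (by linarith) (by linarith)
        positivity
      nlinarith [mul_pos (pow_pos (sub_pos.2 hu) 2) hq]

theorem Real.pow_three_mul_cosh_lt_sinh_pow_three {t : ℝ} (ht : 0 < t) :
    t ^ 3 * cosh t < sinh t ^ 3 := by
  set u := sinh t / t
  have hsinh : sinh t = t * u := (mul_div_cancel₀ _ ht.ne').symm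
  have hu : 1 + t ^ 2 / 6 ≤ u := by
    rw [le_div_iff₀ ht]
    linarith [add_pow_three_div_six_le_sinh ht.le]
  have hsq : (t ^ 3 * cosh t) ^ 2 < (sinh t ^ 3) ^ 2 := by
    have key := one_add_sq_mul_sq_lt_pow_six (t := t) (u := u) (by nlinarith) (by linarith)
    calc (t ^ 3 * cosh t) ^ 2 = t ^ 6 * (1 + sinh t ^ 2) := by rw [mul_pow, cosh_sq']; ring
      _ = t ^ 6 * (1 + t ^ 2 * u ^ 2) := by rw [hsinh]; ring
      _ < t ^ 6 * u ^ 6 := by gcongr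
      _ = (sinh t ^ 3) ^ 2 := by rw [hsinh]; ring
  exact lt_of_pow_lt_pow_left₀ 2 (pow_pos (sinh_pos_iff.2 ht) 3).le hsq

lemma hasDerivAt_inv_sq_sub_inv_sinh_sq {t : ℝ} (ht : t ≠ 0) :
    HasDerivAt (fun t ↦ (t ^ 2)⁻¹ - (sinh t ^ 2)⁻¹)
      (-2 / t ^ 3 + 2 * cosh t / sinh t ^ 3) t := by
  have hs : sinh t ≠ 0 := sinh_ne_zero.2 ht
  refine (((hasDerivAt_pow 2 t).inv (pow_ne_zero 2 ht)).sub
    (((hasDerivAt_sinh t).pow 2).inv (pow_ne_zero 2 hs))).congr_deriv ?_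
  simp only [Pi.pow_apply]
  field_simp
  ring

theorem strictAntiOn_inv_sq_sub_inv_sinh_sq :
    StrictAntiOn (fun t ↦ (t ^ 2)⁻¹ - (sinh t ^ 2)⁻¹) (Ioi 0) := by
  refine strictAntiOn_of_deriv_neg (convex_Ioi 0) (fun t ht ↦ ?_) fun t ht ↦ ?_
  · exact (hasDerivAt_inv_sq_sub_inv_sinh_sq (ne_of_gt ht)).continuousAt.continuousWithinAt
  · rw [interior_Ioi, mem_Ioi] at ht
    have hs : 0 < sinh t := sinh_pos_iff.2 ht
    rw [(hasDerivAt_inv_sq_sub_inv_sinh_sq ht.ne').deriv, neg_div, neg_add_lt_iff_lt_add,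
      add_zero, div_lt_div_iff₀ (by positivity) (by positivity)]
    linarith [pow_three_mul_cosh_lt_sinh_pow_three ht]

theorem Real.one_sub_exp_neg_sq (x : ℝ) :
    (1 - exp (-x)) ^ 2 = exp (-x) * (2 * sinh (x / 2)) ^ 2 := by
  have h : exp x = exp (x / 2) ^ 2 := by rw [sq, ← exp_add, add_halves]
  rw [sinh_eq, exp_neg, exp_neg, h]
  field_simp

theorem Real.exp_neg_div_one_sub_exp_neg_sq (x : ℝ) :
    exp (-x) / (1 - exp (-x)) ^ 2 = ((2 * sinh (x / 2)) ^ 2)⁻¹ := by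
  rw [one_sub_exp_neg_sq, div_mul_cancel_left₀ (exp_ne_zero _)]

theorem strictAntiOn_one_div_sq_sub_exp_neg_div :
    StrictAntiOn (fun x ↦ 1 / x ^ 2 - exp (-x) / (1 - exp (-x)) ^ 2) (Ioi 0) := by
  intro a ha b hb hab
  have := strictAntiOn_inv_sq_sub_inv_sinh_sq (show a / 2 ∈ Ioi 0 from half_pos (mem_Ioi.1 ha))
    (show b / 2 ∈ Ioi 0 from half_pos (mem_Ioi.1 hb)) (by linarith)
  simp only [exp_neg_div_one_sub_exp_neg_sq, mul_pow, div_pow] at this ⊢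
  field_simp at this ⊢
  linarith

theorem Real.exp_one_quotient_eq :
    (exp 1 ^ 2 - 3 * exp 1 + 1) / (exp 1 ^ 2 - 2 * exp 1 + 1) =
      1 - exp (-1) / (1 - exp (-1)) ^ 2 := by
  have : exp 1 - 1 ≠ 0 := by linarith [add_one_lt_exp one_ne_zero]
  rw [show exp 1 ^ 2 - 2 * exp 1 + 1 = (exp 1 - 1) ^ 2 by ring, exp_neg]
  field_simp
  ring

theorem stmt11 (x : ℝ) (hx1 : 0 < x) (hx2 : x < 1) :
    Real.exp (-x) / (1 - Real.exp (-x)) ^ 2 <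
      1 / x ^ 2 - (Real.exp 1 ^ 2 - 3 * Real.exp 1 + 1) /
        (Real.exp 1 ^ 2 - 2 * Real.exp 1 + 1) := by
  have h := strictAntiOn_one_div_sq_sub_exp_neg_div hx1 (zero_lt_one' ℝ) hx2
  simp only [one_pow, div_one] at h
  rw [exp_one_quotient_eq]
  linarith
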